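/- arXiv:2506.15434 — 2 statements merged into one kernel-verified Lean document; each statement's English description precedes it below -/
import Mathlib

section
/- Let g : ℝ² → ℝ be a smooth compactly supported function and c := exp∘g. Then ∫_{ℝ²} c⁻² |∇c|² Δc dx = 2∫_{ℝ²} c⁻³ |∇c|⁴ dx − 2∫_{ℝ²} c⁻² ⟨D²c ∇c, ∇c⟩ dx, where ⟨D²c ∇c, ∇c⟩ = Σ_{i,j} (∂²_{ij}c)(∂_i c)(∂_j c). -/
open MeasureTheory Real

noncomputable section

/-- The plane `ℝ²` as a Euclidean space. -/
abbrev E2 : Type := EuclideanSpace ℝ (Fin 2)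

/-- `i`-th partial derivative of a scalar function on `ℝ²`. -/
def pd (i : Fin 2) (f : E2 → ℝ) (x : E2) : ℝ :=
  fderiv ℝ f x (EuclideanSpace.single i 1)

/-- Laplacian `Δf = ∑ i, ∂_i ∂_i f`. -/
def lap (f : E2 → ℝ) (x : E2) : ℝ := ∑ i, pd i (pd i f) x

/-- `|∇f|² = ∑ i, (∂_i f)²`. -/
def gradSq (f : E2 → ℝ) (x : E2) : ℝ := ∑ i, (pd i f x) ^ 2

/-- Squared Frobenius norm of the Hessian: `|D²f|² = ∑ i j, (∂²_{ij} f)²`. -/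
def hessSq (f : E2 → ℝ) (x : E2) : ℝ := ∑ i, ∑ j, (pd i (pd j f) x) ^ 2

/-- `⟨D²f ∇f, ∇f⟩ = ∑ i j, (∂²_{ij} f)(∂_i f)(∂_j f)`. -/
def hessGrad (f : E2 → ℝ) (x : E2) : ℝ :=
  ∑ i, ∑ j, pd i (pd j f) x * pd i f x * pd j f x

end

/-!
Integrate by parts in each direction `i` against the weight `w = |∇c|² / c²`:
`∫ w ∂ᵢ∂ᵢc = -∫ ∂ᵢw ∂ᵢc`. Since `∂ᵢw = 2 ∑ⱼ ∂ⱼc ∂ᵢ∂ⱼc / c² - 2 |∇c|² ∂ᵢc / c³`,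
summing over `i` turns the right-hand side into `-2 ∫ ⟨D²c ∇c, ∇c⟩ / c² + 2 ∫ |∇c|⁴ / c³`.
No boundary terms arise because `∇c` has compact support.
-/

section IntegrationByParts

variable {E : Type*} [NormedAddCommGroup E] [NormedSpace ℝ E] [FiniteDimensional ℝ E]
  [MeasurableSpace E] [BorelSpace E] {μ : Measure E} [μ.IsAddHaarMeasure]

theorem integral_mul_fderiv_eq_neg_fderiv_mul_of_hasCompactSupport {f g : E → ℝ}
    (hf : ContDiff ℝ 1 f) (hg : ContDiff ℝ 1 g) (hgc : HasCompactSupport g) (v : E) :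
    ∫ x, f x * fderiv ℝ g x v ∂μ = -∫ x, fderiv ℝ f x v * g x ∂μ := by
  have hf' : Continuous fun x => fderiv ℝ f x v :=
    (hf.continuous_fderiv one_ne_zero).clm_apply continuous_const
  have hg' : Continuous fun x => fderiv ℝ g x v :=
    (hg.continuous_fderiv one_ne_zero).clm_apply continuous_const
  refine integral_mul_fderiv_eq_neg_fderiv_mul_of_integrable ?_ ?_ ?_
    (fun x _ => hf.differentiable one_ne_zero x) (fun x _ => hg.differentiable one_ne_zero x)
  · exact (hf'.mul hg.continuous).integrable_of_hasCompactSupport hgc.mul_left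
  · exact (hf.continuous.mul hg').integrable_of_hasCompactSupport (hgc.fderiv_apply ℝ v).mul_left
  · exact (hf.continuous.mul hg.continuous).integrable_of_hasCompactSupport hgc.mul_left

end IntegrationByParts

section PartialDerivatives

variable {f g : E2 → ℝ} {x : E2} (i : Fin 2)

theorem ContDiff.contDiff_pd {m n : WithTop ℕ∞} (hf : ContDiff ℝ n f) (hmn : m + 1 ≤ n) :
    ContDiff ℝ m (pd i f) :=
  (hf.fderiv_right hmn).clm_apply contDiff_const

theorem ContDiff.continuous_pd {n : WithTop ℕ∞} (hf : ContDiff ℝ n f) (hn : 1 ≤ n) :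
    Continuous (pd i f) :=
  (hf.contDiff_pd i (m := 0) (by simpa using hn)).continuous

theorem HasCompactSupport.pd_of_sub_const {a : ℝ} (hf : HasCompactSupport fun x => f x - a) :
    HasCompactSupport (pd i f) := by
  have h : pd i f = pd i fun x => f x - a := by
    funext x
    simp only [pd, fderiv_sub_const]
  rw [h]
  exact hf.fderiv_apply ℝ _

theorem pd_div (hf : DifferentiableAt ℝ f x) (hg : DifferentiableAt ℝ g x) (h0 : g x ≠ 0) :
    pd i (fun y => f y / g y) x = (pd i f x * g x - f x * pd i g x) / g x ^ 2 := by
  have h := hf.hasFDerivAt.fun_mul ((hasDerivAt_inv h0).comp_hasFDerivAt x hg.hasFDerivAt)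
  simp only [pd, div_eq_mul_inv, Function.comp_def] at h ⊢
  rw [h.fderiv]
  simp only [neg_smul, smul_neg, add_apply, neg_apply, smul_apply, smul_eq_mul]
  field_simp
  ring

theorem pd_pow (n : ℕ) (hf : DifferentiableAt ℝ f x) :
    pd i (fun y => f y ^ n) x = n * f x ^ (n - 1) * pd i f x := by
  simp [pd, fderiv_fun_pow n hf, mul_assoc]

theorem pd_sum {ι : Type*} (s : Finset ι) {F : ι → E2 → ℝ}
    (hF : ∀ j ∈ s, DifferentiableAt ℝ (F j) x) :
    pd i (fun y => ∑ j ∈ s, F j y) x = ∑ j ∈ s, pd i (F j) x := by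
  simp only [pd, fderiv_fun_sum hF, FunLike.coe_sum, Finset.sum_apply]

theorem pd_gradSq (hf : ∀ j, DifferentiableAt ℝ (pd j f) x) :
    pd i (gradSq f) x = 2 * ∑ j, pd j f x * pd i (pd j f) x := by
  have h : gradSq f = fun y => ∑ j, pd j f y ^ 2 := rfl
  rw [h, pd_sum i _ fun j _ => (hf j).fun_pow 2, Finset.mul_sum]
  refine Finset.sum_congr rfl fun j _ => ?_
  rw [pd_pow i 2 (hf j)]
  push_cast
  ring

end PartialDerivatives

section GradientSupported

variable {c : E2 → ℝ} {x : E2}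

theorem HasCompactSupport.of_forall_pd_eq_zero (hsupp : ∀ i, HasCompactSupport (pd i c))
    {F : E2 → ℝ} (hF : ∀ x, (∀ i, pd i c x = 0) → F x = 0) : HasCompactSupport F := by
  refine .intro (isCompact_iUnion hsupp) fun x hx => hF x fun i => ?_
  exact image_eq_zero_of_notMem_tsupport fun h => hx (Set.mem_iUnion_of_mem i h)

theorem sum_pd_gradSq_div_sq_mul_pd (hc : ∀ j, DifferentiableAt ℝ (pd j c) x)
    (hcx : DifferentiableAt ℝ c x) (hne : c x ≠ 0) :
    ∑ i, pd i (fun y => gradSq c y / c y ^ 2) x * pd i c x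
      = 2 * (hessGrad c x / c x ^ 2) - 2 * (gradSq c x ^ 2 / c x ^ 3) := by
  have hG : DifferentiableAt ℝ (gradSq c) x := by
    have h : gradSq c = fun y => ∑ j, pd j c y ^ 2 := rfl
    rw [h]
    exact DifferentiableAt.fun_sum fun j _ => (hc j).fun_pow 2
  simp only [pd_div _ hG (hcx.fun_pow 2) (pow_ne_zero 2 hne), pd_gradSq _ hc, pd_pow _ 2 hcx]
  simp only [gradSq, hessGrad, Fin.sum_univ_two]
  field_simp
  ring

theorem integral_mul_lap_eq_neg_integral_sum_pd_mul_pd {w : E2 → ℝ} (hw : ContDiff ℝ 1 w)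
    (hc : ContDiff ℝ 2 c) (hsupp : ∀ i, HasCompactSupport (pd i c)) :
    ∫ x, w x * lap c x = -∫ x, ∑ i, pd i w x * pd i c x := by
  have hc1 : ∀ i, ContDiff ℝ 1 (pd i c) := fun i => hc.contDiff_pd i (by norm_num)
  have hint : ∀ i, Integrable fun x => w x * pd i (pd i c) x := fun i =>
    (hw.continuous.mul ((hc1 i).continuous_pd i le_rfl)).integrable_of_hasCompactSupport
      ((hsupp i).fderiv_apply ℝ _).mul_left
  have hint' : ∀ i, Integrable fun x => pd i w x * pd i c x := fun i =>
    ((hw.continuous_pd i le_rfl).mul (hc1 i).continuous).integrable_of_hasCompactSupport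
      (hsupp i).mul_left
  simp only [lap, Finset.mul_sum]
  rw [integral_finsetSum _ fun i _ => hint i, integral_finsetSum _ fun i _ => hint' i,
    ← Finset.sum_neg_distrib]
  exact Finset.sum_congr rfl fun i _ =>
    integral_mul_fderiv_eq_neg_fderiv_mul_of_hasCompactSupport hw (hc1 i) (hsupp i) _

theorem integral_gradSq_mul_lap_div_sq (hc : ContDiff ℝ 2 c) (hne : ∀ x, c x ≠ 0)
    (hsupp : ∀ i, HasCompactSupport (pd i c)) :
    ∫ x, gradSq c x * lap c x / c x ^ 2
      = 2 * (∫ x, gradSq c x ^ 2 / c x ^ 3) - 2 * ∫ x, hessGrad c x / c x ^ 2 := by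
  have hc1 : ∀ j, ContDiff ℝ 1 (pd j c) := fun j => hc.contDiff_pd j (by norm_num)
  have hG : ContDiff ℝ 1 (gradSq c) := ContDiff.sum fun j _ => (hc1 j).pow 2
  have hw : ContDiff ℝ 1 fun x => gradSq c x / c x ^ 2 :=
    hG.div ((hc.of_le (by norm_num)).pow 2) fun x => pow_ne_zero 2 (hne x)
  have hH : Integrable fun x => hessGrad c x / c x ^ 2 := by
    have hc1' : ∀ j, Continuous (pd j c) := fun j => (hc1 j).continuous
    have hc2 : ∀ i j, Continuous (pd i (pd j c)) := fun i j => (hc1 j).continuous_pd i le_rfl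
    have : Continuous (hessGrad c) := by unfold hessGrad; fun_prop
    refine (this.div (hc.continuous.pow 2) fun x => pow_ne_zero 2 (hne x))
      |>.integrable_of_hasCompactSupport (.of_forall_pd_eq_zero hsupp fun x h => ?_)
    simp [hessGrad, h]
  have hQ : Integrable fun x => gradSq c x ^ 2 / c x ^ 3 := by
    refine ((hG.continuous.pow 2).div (hc.continuous.pow 3) fun x => pow_ne_zero 3 (hne x))
      |>.integrable_of_hasCompactSupport (.of_forall_pd_eq_zero hsupp fun x h => ?_)
    simp [gradSq, h]
  calc ∫ x, gradSq c x * lap c x / c x ^ 2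
      = ∫ x, gradSq c x / c x ^ 2 * lap c x := by simp only [div_mul_eq_mul_div]
    _ = -∫ x, ∑ i, pd i (fun y => gradSq c y / c y ^ 2) x * pd i c x :=
        integral_mul_lap_eq_neg_integral_sum_pd_mul_pd hw hc hsupp
    _ = -∫ x, (2 * (hessGrad c x / c x ^ 2) - 2 * (gradSq c x ^ 2 / c x ^ 3)) := by
        congr 2 with x
        exact sum_pd_gradSq_div_sq_mul_pd (fun j => (hc1 j).differentiable one_ne_zero x)
          (hc.differentiable two_ne_zero x) (hne x)
    _ = 2 * (∫ x, gradSq c x ^ 2 / c x ^ 3) - 2 * ∫ x, hessGrad c x / c x ^ 2 := by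
        rw [integral_sub (hH.const_mul 2) (hQ.const_mul 2), integral_const_mul, integral_const_mul]
        ring

end GradientSupported

/-- Equation (3.7): for `c = exp ∘ g` with `g` smooth and compactly supported,
`∫ c⁻² |∇c|² Δc = 2 ∫ c⁻³ |∇c|⁴ − 2 ∫ c⁻² ⟨D²c ∇c, ∇c⟩`. -/
theorem stmt2 (g : E2 → ℝ) (hg : ContDiff ℝ (⊤ : ℕ∞) g) (hgc : HasCompactSupport g)
    (c : E2 → ℝ) (hc : c = fun x => Real.exp (g x)) :
    ∫ x : E2, gradSq c x * lap c x / (c x) ^ 2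
      = 2 * (∫ x : E2, (gradSq c x) ^ 2 / (c x) ^ 3)
        - 2 * ∫ x : E2, hessGrad c x / (c x) ^ 2 := by
  subst hc
  have hsub : HasCompactSupport fun x => exp (g x) - 1 :=
    hgc.comp_left (g := fun t => exp t - 1) (by simp)
  have hc : ContDiff ℝ 2 fun x => exp (g x) :=
    (contDiff_exp.comp hg).of_le (WithTop.coe_le_coe.2 le_top)
  exact integral_gradSq_mul_lap_div_sq hc (fun x => exp_ne_zero _) fun i => hsub.pd_of_sub_const i
end

section
/- There exists a constant C > 0 (independent of n) such that for every smooth compactly supported function n : ℝ² → ℝ with n ≥ 0 everywhere, one has ‖n‖_{L²(ℝ²)} ≤ C (1 + ‖∇√(n+1)‖_{L²(ℝ²)}) ‖n‖_{L¹(ℝ²)}^{1/2}, where √(n+1) denotes the function x ↦ √(n(x)+1) (which is smooth since n+1 ≥ 1, and whose gradient is compactly supported). -/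
open MeasureTheory Real

/-
With `w = √(n + 1) - 1` one has `w² ≤ n` and, splitting into `n < 1` and `n ≥ 1`,
`n² ≤ n + 36 w⁴` pointwise. The Gagliardo–Nirenberg–Sobolev inequality
`‖u‖_{L²} ≤ C ‖∇u‖_{L¹}` in the plane, applied to `u = w²` and followed by Cauchy–Schwarz,
gives Ladyzhenskaya's inequality `∫ w⁴ ≤ 4C ∫ w² ∫ |∇w|²`, and `∇w = ∇√(n + 1)`.
Hence `∫ n² ≤ ∫ n · (1 + 144 C ∫ |∇√(n + 1)|²)`.
-/

open Module

theorem integral_norm_mul_norm_le_sqrt_mul_sqrt {α F G : Type*} [MeasurableSpace α]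
    {μ : Measure α} [NormedAddCommGroup F] [NormedAddCommGroup G] {f : α → F} {g : α → G}
    (hf : MemLp f 2 μ) (hg : MemLp g 2 μ) :
    ∫ a, ‖f a‖ * ‖g a‖ ∂μ ≤ √(∫ a, ‖f a‖ ^ 2 ∂μ) * √(∫ a, ‖g a‖ ^ 2 ∂μ) := by
  have h := integral_mul_norm_le_Lp_mul_Lq (μ := μ) Real.HolderConjugate.two_two
    (f := fun a => ‖f a‖) (g := fun a => ‖g a‖)
    (by simpa using hf.norm) (by simpa using hg.norm)
  simpa only [norm_norm, Real.rpow_two, ← Real.sqrt_eq_rpow] using h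

theorem Continuous.integrable_pow_of_hasCompactSupport {α : Type*} [TopologicalSpace α]
    [MeasurableSpace α] [OpensMeasurableSpace α] {μ : Measure α} [IsFiniteMeasureOnCompacts μ]
    {f : α → ℝ} (hf : Continuous f) (h2f : HasCompactSupport f) {k : ℕ} (hk : k ≠ 0) :
    Integrable (fun x => f x ^ k) μ :=
  (hf.pow k).integrable_of_hasCompactSupport
    (h2f.comp_left (g := fun t : ℝ => t ^ k) (zero_pow hk))

theorem norm_fderiv_sq {E : Type*} [NormedAddCommGroup E] [NormedSpace ℝ E] {w : E → ℝ} {x : E}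
    (hw : DifferentiableAt ℝ w x) :
    ‖fderiv ℝ (fun y => w y ^ 2) x‖ = 2 * (‖w x‖ * ‖fderiv ℝ w x‖) := by
  rw [(hw.hasFDerivAt.pow 2).fderiv, norm_smul]
  simp [mul_assoc]

theorem sqrt_add_one_sub_one_sq_le {t : ℝ} (ht : 0 ≤ t) : (√(t + 1) - 1) ^ 2 ≤ t := by
  have hs : 1 ≤ √(t + 1) := one_le_sqrt.mpr (by linarith)
  nlinarith [sq_sqrt (show 0 ≤ t + 1 by linarith)]

theorem sq_le_add_sqrt_add_one_sub_one_pow_four {t : ℝ} (ht : 0 ≤ t) :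
    t ^ 2 ≤ t + 36 * (√(t + 1) - 1) ^ 4 := by
  set s := √(t + 1)
  have hs1 : 1 ≤ s := one_le_sqrt.mpr (by linarith)
  have hss : s ^ 2 = t + 1 := sq_sqrt (by linarith)
  rcases le_or_gt t 1 with hle | hgt
  · nlinarith [pow_nonneg (sub_nonneg.mpr hs1) 4]
  · -- `s ≥ 7/5` here, and then `s + 1 ≤ 6 (s - 1)`
    have h7 : 7 ≤ 5 * s := by nlinarith
    have hfac : t ^ 2 = (s - 1) ^ 2 * (s + 1) ^ 2 := by rw [← mul_pow]; nlinarith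
    have h6 : (s + 1) ^ 2 ≤ 36 * (s - 1) ^ 2 := by nlinarith
    nlinarith [mul_le_mul_of_nonneg_left h6 (sq_nonneg (s - 1))]

section FiniteDimensional

variable {E : Type*} [NormedAddCommGroup E] [NormedSpace ℝ E] [MeasurableSpace E] [BorelSpace E]
  [FiniteDimensional ℝ E] (μ : Measure E) [μ.IsAddHaarMeasure]

theorem integral_sq_le_sq_integral_norm_fderiv (hE : finrank ℝ E = 2) {u : E → ℝ}
    (hu : ContDiff ℝ 1 u) (h2u : HasCompactSupport u) :
    ∫ x, u x ^ 2 ∂μ ≤ lintegralPowLePowLIntegralFDerivConst μ 2 * (∫ x, ‖fderiv ℝ u x‖ ∂μ) ^ 2 := by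
  have hp : Real.HolderConjugate (finrank ℝ E) 2 := by
    rw [hE]; exact_mod_cast Real.HolderConjugate.two_two
  have sob := lintegral_pow_le_pow_lintegral_fderiv μ hu h2u hp
  have hDu : Integrable (fderiv ℝ u) μ :=
    (hu.continuous_fderiv one_ne_zero).integrable_of_hasCompactSupport (h2u.fderiv (𝕜 := ℝ))
  have hu2 : Integrable (fun x => u x ^ 2) μ :=
    hu.continuous.integrable_pow_of_hasCompactSupport h2u two_ne_zero
  have hlhs : ∫⁻ x, ‖u x‖ₑ ^ (2 : ℝ) ∂μ = ENNReal.ofReal (∫ x, u x ^ 2 ∂μ) := by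
    rw [ofReal_integral_eq_lintegral_ofReal hu2 (ae_of_all _ fun x => sq_nonneg _)]
    congr 1 with x
    rw [← ofReal_norm, ENNReal.ofReal_rpow_of_nonneg (norm_nonneg _) zero_le_two]
    simp
  rw [hlhs, ← ofReal_integral_norm_eq_lintegral_enorm hDu,
    ENNReal.ofReal_rpow_of_nonneg (integral_nonneg fun _ => norm_nonneg _) zero_le_two,
    ← ENNReal.ofReal_coe_nnreal, ← ENNReal.ofReal_mul NNReal.zero_le_coe,
    ENNReal.ofReal_le_ofReal_iff (by positivity)] at sob
  exact_mod_cast sob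

theorem integral_pow_four_le_integral_sq_mul_integral_norm_fderiv_sq (hE : finrank ℝ E = 2)
    {w : E → ℝ} (hw : ContDiff ℝ 1 w) (h2w : HasCompactSupport w) :
    ∫ x, w x ^ 4 ∂μ ≤ 4 * lintegralPowLePowLIntegralFDerivConst μ 2 *
      (∫ x, w x ^ 2 ∂μ) * ∫ x, ‖fderiv ℝ w x‖ ^ 2 ∂μ := by
  have hDw : Continuous (fderiv ℝ w) := hw.continuous_fderiv one_ne_zero
  have hCS := integral_norm_mul_norm_le_sqrt_mul_sqrt (μ := μ)
    (hw.continuous.memLp_of_hasCompactSupport h2w)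
    (hDw.memLp_of_hasCompactSupport (h2w.fderiv (𝕜 := ℝ)))
  have hDsq : ∫ x, ‖fderiv ℝ (fun y => w y ^ 2) x‖ ∂μ
      ≤ 2 * (√(∫ x, w x ^ 2 ∂μ) * √(∫ x, ‖fderiv ℝ w x‖ ^ 2 ∂μ)) := by
    simp only [norm_fderiv_sq (hw.differentiable one_ne_zero _), integral_const_mul]
    simp only [Real.norm_eq_abs, sq_abs] at hCS ⊢
    exact mul_le_mul_of_nonneg_left hCS zero_le_two
  have hSob := integral_sq_le_sq_integral_norm_fderiv μ hE (hw.pow 2)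
    (h2w.comp_left (g := fun t : ℝ => t ^ 2) (zero_pow two_ne_zero))
  have hsq : (∫ x, ‖fderiv ℝ (fun y => w y ^ 2) x‖ ∂μ) ^ 2
      ≤ 4 * ((∫ x, w x ^ 2 ∂μ) * ∫ x, ‖fderiv ℝ w x‖ ^ 2 ∂μ) := by
    calc _ ≤ (2 * (√(∫ x, w x ^ 2 ∂μ) * √(∫ x, ‖fderiv ℝ w x‖ ^ 2 ∂μ))) ^ 2 :=
          pow_le_pow_left₀ (integral_nonneg fun _ => norm_nonneg _) hDsq 2
      _ = _ := by
          rw [mul_pow, mul_pow, sq_sqrt (integral_nonneg fun _ => sq_nonneg _),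
            sq_sqrt (integral_nonneg fun _ => sq_nonneg _)]
          norm_num
  calc ∫ x, w x ^ 4 ∂μ = ∫ x, (w x ^ 2) ^ 2 ∂μ := by simp only [← pow_mul]
    _ ≤ _ := hSob
    _ ≤ _ := mul_le_mul_of_nonneg_left hsq NNReal.zero_le_coe
    _ = _ := by ring

theorem integral_sq_le_integral_mul_one_add_integral_norm_fderiv_sqrt_sq (hE : finrank ℝ E = 2)
    {n : E → ℝ} (hn : ContDiff ℝ 1 n) (h2n : HasCompactSupport n) (h0 : ∀ x, 0 ≤ n x) :
    ∫ x, n x ^ 2 ∂μ ≤ (∫ x, n x ∂μ) * (1 + 144 * lintegralPowLePowLIntegralFDerivConst μ 2 *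
      ∫ x, ‖fderiv ℝ (fun y => √(n y + 1)) x‖ ^ 2 ∂μ) := by
  set C : ℝ := (lintegralPowLePowLIntegralFDerivConst μ 2 : ℝ)
  set G := ∫ x, ‖fderiv ℝ (fun y => √(n y + 1)) x‖ ^ 2 ∂μ
  set w : E → ℝ := fun x => √(n x + 1) - 1
  have hw : ContDiff ℝ 1 w :=
    ((hn.add contDiff_const).sqrt fun x => by linarith [h0 x]).sub contDiff_const
  have h2w : HasCompactSupport w := h2n.comp_left (g := fun t => √(t + 1) - 1) (by simp)
  have hDw : ∀ x, fderiv ℝ w x = fderiv ℝ (fun y => √(n y + 1)) x := fun x => fderiv_sub_const 1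
  have hint_n : Integrable n μ := hn.continuous.integrable_of_hasCompactSupport h2n
  have hint_w4 : Integrable (fun x => w x ^ 4) μ :=
    hw.continuous.integrable_pow_of_hasCompactSupport h2w four_ne_zero
  have hw2 : ∫ x, w x ^ 2 ∂μ ≤ ∫ x, n x ∂μ :=
    integral_mono (hw.continuous.integrable_pow_of_hasCompactSupport h2w two_ne_zero) hint_n
      fun x => sqrt_add_one_sub_one_sq_le (h0 x)
  have hLad := integral_pow_four_le_integral_sq_mul_integral_norm_fderiv_sq μ hE hw h2w
  simp only [hDw] at hLad
  have hG : 0 ≤ G := integral_nonneg fun _ => sq_nonneg _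
  calc ∫ x, n x ^ 2 ∂μ ≤ ∫ x, (n x + 36 * w x ^ 4) ∂μ :=
        integral_mono (hn.continuous.integrable_pow_of_hasCompactSupport h2n two_ne_zero)
          (hint_n.add (hint_w4.const_mul 36))
          fun x => sq_le_add_sqrt_add_one_sub_one_pow_four (h0 x)
    _ = (∫ x, n x ∂μ) + 36 * ∫ x, w x ^ 4 ∂μ := by
        rw [integral_add hint_n (hint_w4.const_mul 36), integral_const_mul]
    _ ≤ (∫ x, n x ∂μ) + 36 * (4 * C * (∫ x, n x ∂μ) * G) := by
        gcongr
        exact hLad.trans (by gcongr)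
    _ = _ := by ring

end FiniteDimensional

theorem EuclideanSpace.sum_sq_apply_single_eq_norm_sq {ι : Type*} [Fintype ι] [DecidableEq ι]
    (L : EuclideanSpace ℝ ι →L[ℝ] ℝ) :
    ∑ i, L (EuclideanSpace.single i 1) ^ 2 = ‖L‖ ^ 2 := by
  have hv (i : ι) : L (EuclideanSpace.single i 1) = (InnerProductSpace.toDual ℝ _).symm L i := by
    rw [← InnerProductSpace.toDual_symm_apply, EuclideanSpace.inner_single_right]; simp
  rw [← (InnerProductSpace.toDual ℝ _).symm.norm_map L, EuclideanSpace.norm_sq_eq]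
  simp [hv]

theorem gradSq_eq_norm_fderiv_sq (f : E2 → ℝ) (x : E2) : gradSq f x = ‖fderiv ℝ f x‖ ^ 2 :=
  EuclideanSpace.sum_sq_apply_single_eq_norm_sq _

theorem sqrt_one_add_mul_le {a b : ℝ} (ha : 0 ≤ a) (hb : 0 ≤ b) :
    √(1 + a * b) ≤ (1 + √a) * (1 + √b) := by
  rw [sqrt_le_left (by positivity), mul_pow, add_sq, add_sq, sq_sqrt ha, sq_sqrt hb]
  nlinarith [sqrt_nonneg a, sqrt_nonneg b]

/-- Estimate (3.18): there is a universal constant `C > 0` such that for every smooth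
compactly supported `n ≥ 0` on `ℝ²`,
`‖n‖_{L²} ≤ C (1 + ‖∇√(n+1)‖_{L²}) ‖n‖_{L¹}^{1/2}`. -/
theorem stmt13 :
    ∃ C : ℝ, 0 < C ∧
      ∀ n : E2 → ℝ, ContDiff ℝ (⊤ : ℕ∞) n → HasCompactSupport n → (∀ x, 0 ≤ n x) →
        Real.sqrt (∫ x : E2, (n x) ^ 2)
          ≤ C * (1 + Real.sqrt (∫ x : E2, gradSq (fun y => Real.sqrt (n y + 1)) x))
            * Real.sqrt (∫ x : E2, n x) := by
  set a : ℝ := 144 * lintegralPowLePowLIntegralFDerivConst (volume : Measure E2) 2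
  refine ⟨1 + √a, by positivity, fun n hn h2n h0 => ?_⟩
  have key := integral_sq_le_integral_mul_one_add_integral_norm_fderiv_sqrt_sq volume
    (finrank_euclideanSpace_fin (n := 2)) (hn.of_le (by exact_mod_cast le_top)) h2n h0
  simp only [gradSq_eq_norm_fderiv_sq]
  set G := ∫ x, ‖fderiv ℝ (fun y => √(n y + 1)) x‖ ^ 2
  calc √(∫ x, n x ^ 2) ≤ √(∫ x, n x) * √(1 + a * G) := by
        rw [← sqrt_mul (integral_nonneg h0)]; exact sqrt_le_sqrt key
    _ ≤ √(∫ x, n x) * ((1 + √a) * (1 + √G)) :=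
        mul_le_mul_of_nonneg_left (sqrt_one_add_mul_le (by positivity)
          (integral_nonneg fun _ => sq_nonneg _)) (sqrt_nonneg _)
    _ = _ := by ring
end
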